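/- Fix integers i ≥ 0 and d ≥ 1, a real ξ > 0, and a real ε with 0 < ε ≤ 1/(32√(i+1)). Let p, p′ ∈ [1/4, 3/4] satisfy 2ε ≤ |p − p′| ≤ 4ε. Then for every function A : {0,1}^i → ℝ^d: E_{X∼B_p^i}[‖A(X) − ξ·p⃗‖₂²] + E_{X′∼B_{p′}^i}[‖A(X′) − ξ·p⃗′‖₂²] ≥ d·(ξε)²/4, where p⃗ = (p,…,p) ∈ ℝ^d and p⃗′ = (p′,…,p′) ∈ ℝ^d. -/

import Mathlib

/-!
Statement 9 (Lemma 6): for `0 < ε ≤ 1/(32√(i+1))` and `p, p′ ∈ [1/4, 3/4]` with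
`2ε ≤ |p − p′| ≤ 4ε`, every function `A : {0,1}^i → ℝ^d` satisfies
`E_{B_p^i}[‖A(X) − ξ·p⃗‖²] + E_{B_{p′}^i}[‖A(X′) − ξ·p⃗′‖²] ≥ d(ξε)²/4`.
-/

open scoped BigOperators
open Finset

noncomputable section

abbrev EV (d : ℕ) := EuclideanSpace ℝ (Fin d)

/-- Expectation of `F` under the product Bernoulli measure `B_p^i` on `{0,1}^i`. -/
def bernExp (i : ℕ) (p : ℝ) (F : (Fin i → Bool) → ℝ) : ℝ :=
  ∑ X : Fin i → Bool, (∏ j : Fin i, if X j then p else 1 - p) * F X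

/-- The constant vector `(p, …, p) ∈ ℝ^d`. -/
def constVec (d : ℕ) (p : ℝ) : EV d := WithLp.toLp 2 (fun _ => p)

lemma my_sqrt_prod {α : Type*} (s : Finset α) (f : α → ℝ) (hf : ∀ a ∈ s, 0 ≤ f a) :
    Real.sqrt (∏ a ∈ s, f a) = ∏ a ∈ s, Real.sqrt (f a) := by
  induction s using Finset.cons_induction with
  | empty => simp
  | cons a s ha ih =>
    rw [Finset.prod_cons, Finset.prod_cons,
      Real.sqrt_mul (hf a (Finset.mem_cons_self a s)),
      ih (fun b hb => hf b (Finset.mem_cons_of_mem hb))]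

lemma my_sqrt_half {x : ℝ} (hx : 1/4 ≤ x) : 1/2 ≤ Real.sqrt x := by
  have h := Real.sqrt_le_sqrt hx
  rwa [show (1/4:ℝ) = (1/2)^2 by norm_num,
    Real.sqrt_sq (by norm_num : (0:ℝ) ≤ 1/2)] at h

lemma my_amgm_step (a b q q' : ℝ) (ha : 1/2 ≤ a) (hb : 1/2 ≤ b)
    (ha2 : a^2 = q) (hb2 : b^2 = q') : (a-b)^2 ≤ (q - q')^2 := by
  have hid : (a-b)^2*(a+b)^2 = (q-q')^2 := by rw [← ha2, ← hb2]; ring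
  have hab : (1:ℝ) ≤ a + b := by linarith
  have hab1 : (1:ℝ) ≤ (a+b)^2 := by
    calc (1:ℝ) = 1^2 := by norm_num
    _ ≤ (a+b)^2 := pow_le_pow_left₀ (by norm_num) hab 2
  calc (a-b)^2 = (a-b)^2 * 1 := by ring
  _ ≤ (a-b)^2 * (a+b)^2 := mul_le_mul_of_nonneg_left hab1 (sq_nonneg (a-b))
  _ = (q-q')^2 := hid

lemma my_key_step (a b c e p p' : ℝ) (ha2 : a^2 = p) (hb2 : b^2 = p')
    (hc2 : c^2 = 1-p) (he2 : e^2 = 1-p')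
    (h1 : (a-b)^2 ≤ (p-p')^2) (h2 : (c-e)^2 ≤ (p-p')^2) :
    1 - (a*b + c*e) ≤ (p-p')^2 := by
  have e1 : (a-b)^2 = p + p' - 2*(a*b) := by
    rw [← ha2, ← hb2]; ring
  have e2 : (c-e)^2 = (1-p) + (1-p') - 2*(c*e) := by
    rw [← hc2, ← he2]; ring
  linarith

lemma my_eps_step (i : ℕ) (ε : ℝ) (hε0 : 0 < ε)
    (hε : ε ≤ 1/(32*Real.sqrt ((i:ℝ)+1))) : ε^2 ≤ 1/(1024*((i:ℝ)+1)) := by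
  have hs2 : (Real.sqrt ((i:ℝ)+1))^2 = (i:ℝ)+1 := Real.sq_sqrt (by positivity)
  calc ε^2 ≤ (1/(32*Real.sqrt ((i:ℝ)+1)))^2 := pow_le_pow_left₀ hε0.le hε 2
  _ = 1/(1024*((i:ℝ)+1)) := by rw [div_pow, mul_pow, hs2]; norm_num

lemma my_bern_step (i : ℕ) (r : ℝ) (hr0 : 0 ≤ r)
    (hr1 : 1 - r ≤ 1/(64*((i:ℝ)+1))) : (63:ℝ)/64 ≤ r^i := by
  have hi1 : (0:ℝ) < (i:ℝ)+1 := by positivity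
  have hber : 1 + (i:ℝ)*(r-1) ≤ (1+(r-1))^i := one_add_mul_le_pow (by linarith) i
  rw [show (1+(r-1)) = r by ring] at hber
  have h3 : (i:ℝ)*(1-r) ≤ (i:ℝ)*(1/(64*((i:ℝ)+1))) :=
    mul_le_mul_of_nonneg_left hr1 (Nat.cast_nonneg i)
  have h4 : (i:ℝ)*(1/(64*((i:ℝ)+1))) ≤ 1/64 := by
    rw [mul_one_div, div_le_div_iff₀ (by positivity) (by norm_num)]
    nlinarith
  nlinarith

lemma my_mass_step (S ρ : ℝ) (hS : 0 ≤ S) (hρ : (63:ℝ)/64 ≤ ρ)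
    (hCS : ρ^2 ≤ S * (2 - S)) : (1:ℝ)/8 ≤ S := by
  nlinarith [sq_nonneg S]

lemma my_par_step (s t D C : ℝ) (hs : 0 ≤ s) (ht : 0 ≤ t) (hD0 : 0 ≤ D)
    (htri : D ≤ s + t) (hD : 2*C ≤ D^2) : C ≤ s^2 + t^2 := by
  nlinarith [sq_nonneg (s - t)]

lemma my_sq_upper (x ε : ℝ) (h : |x| ≤ 4*ε) : x^2 ≤ 16*ε^2 := by
  have h0 := abs_nonneg x
  have h2 := pow_le_pow_left₀ h0 h 2
  rw [sq_abs] at h2; nlinarith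

lemma my_sq_lower (x ε : ℝ) (hε : 0 ≤ ε) (h : 2*ε ≤ |x|) : 4*ε^2 ≤ x^2 := by
  have h2 := pow_le_pow_left₀ (by linarith : (0:ℝ) ≤ 2*ε) h 2
  rw [sq_abs] at h2; nlinarith

lemma my_hr1 (r x ε T : ℝ) (hT : 0 < T) (hkey : 1 - r ≤ x^2)
    (h1 : x^2 ≤ 16*ε^2) (h2 : ε^2 ≤ 1/(1024*T)) : 1 - r ≤ 1/(64*T) := by
  have h16 : 16*(1/(1024*T)) = 1/(64*T) := by
    rw [mul_one_div, div_eq_div_iff (by positivity) (by positivity)]; ring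
  have h3 : 16*ε^2 ≤ 16*(1/(1024*T)) := by linarith
  linarith

lemma my_hD (dd ξ ε x : ℝ) (hd0 : 0 ≤ dd*ξ^2) (h : 4*ε^2 ≤ x^2) :
    2*(2*dd*ξ^2*ε^2) ≤ dd*ξ^2*x^2 := by nlinarith

set_option maxHeartbeats 1000000 in
theorem statement_9 (i d : ℕ) (hd : 1 ≤ d) (ξ ε p p' : ℝ)
    (hξ : 0 < ξ) (hε0 : 0 < ε) (hε : ε ≤ 1 / (32 * Real.sqrt ((i : ℝ) + 1)))
    (hp : p ∈ Set.Icc (1 / 4 : ℝ) (3 / 4))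
    (hp' : p' ∈ Set.Icc (1 / 4 : ℝ) (3 / 4))
    (hpp1 : 2 * ε ≤ |p - p'|) (hpp2 : |p - p'| ≤ 4 * ε)
    (A : (Fin i → Bool) → EV d) :
    (d : ℝ) * (ξ * ε) ^ 2 / 4 ≤
      bernExp i p (fun X => ‖A X - ξ • constVec d p‖ ^ 2)
        + bernExp i p' (fun X => ‖A X - ξ • constVec d p'‖ ^ 2) := by
  obtain ⟨hp1, hp2⟩ := hp
  obtain ⟨hp1', hp2'⟩ := hp'
  set w : (Fin i → Bool) → ℝ := fun X => ∏ j : Fin i, if X j then p else 1 - p with hw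
  set w' : (Fin i → Bool) → ℝ := fun X => ∏ j : Fin i, if X j then p' else 1 - p' with hw'
  have hw0 : ∀ X, 0 ≤ w X := fun X =>
    Finset.prod_nonneg (fun j _ => by split <;> linarith)
  have hw0' : ∀ X, 0 ≤ w' X := fun X =>
    Finset.prod_nonneg (fun j _ => by split <;> linarith)
  have sumone : ∀ q : ℝ, ∑ X : Fin i → Bool, (∏ j : Fin i, if X j then q else 1 - q) = 1 := by
    intro q
    rw [← Fintype.prod_sum (fun (j : Fin i) (b : Bool) => if b then q else 1-q)]
    have hb : ∀ j : Fin i, (∑ b : Bool, if b then q else 1-q) = 1 := by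
      intro j; rw [Fintype.sum_bool]; norm_num
    rw [Finset.prod_congr rfl (fun j _ => hb j), Finset.prod_const_one]
  have hsumw : ∑ X : Fin i → Bool, w X = 1 := sumone p
  have hsumw' : ∑ X : Fin i → Bool, w' X = 1 := sumone p'
  -- Bhattacharyya coefficient
  set r : ℝ := Real.sqrt (p*p') + Real.sqrt ((1-p)*(1-p')) with hr
  have hρ : ∑ X : Fin i → Bool, Real.sqrt (w X * w' X) = r ^ i := by
    have hterm : ∀ X : Fin i → Bool, Real.sqrt (w X * w' X)
        = ∏ j : Fin i, Real.sqrt ((if X j then p else 1-p) * (if X j then p' else 1-p')) := by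
      intro X
      rw [hw, hw']
      rw [← Finset.prod_mul_distrib]
      exact my_sqrt_prod _ _ (fun j _ => by
        apply mul_nonneg <;> (split <;> linarith))
    simp_rw [hterm]
    rw [← Fintype.prod_sum (fun (j : Fin i) (b : Bool) =>
      Real.sqrt ((if b then p else 1-p) * (if b then p' else 1-p')))]
    have hb : ∀ j : Fin i,
        (∑ b : Bool, Real.sqrt ((if b then p else 1-p) * (if b then p' else 1-p'))) = r := by
      intro j; rw [Fintype.sum_bool]; simp [hr, add_comm]
    rw [Finset.prod_congr rfl (fun j _ => hb j), Finset.prod_const, Finset.card_fin]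
  -- bound r from below
  have ha2 : (Real.sqrt p)^2 = p := Real.sq_sqrt (by linarith)
  have hb2 : (Real.sqrt p')^2 = p' := Real.sq_sqrt (by linarith)
  have hc2 : (Real.sqrt (1-p))^2 = 1-p := Real.sq_sqrt (by linarith)
  have he2 : (Real.sqrt (1-p'))^2 = 1-p' := Real.sq_sqrt (by linarith)
  have haq : 1/2 ≤ Real.sqrt p := my_sqrt_half hp1
  have hbq : 1/2 ≤ Real.sqrt p' := my_sqrt_half hp1'
  have hcq : 1/2 ≤ Real.sqrt (1-p) := my_sqrt_half (by linarith)
  have heq : 1/2 ≤ Real.sqrt (1-p') := my_sqrt_half (by linarith)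
  have hrab : r = Real.sqrt p * Real.sqrt p' + Real.sqrt (1-p) * Real.sqrt (1-p') := by
    rw [hr, Real.sqrt_mul (by linarith), Real.sqrt_mul (by linarith)]
  have h1 : (Real.sqrt p - Real.sqrt p')^2 ≤ (p - p')^2 :=
    my_amgm_step _ _ _ _ haq hbq ha2 hb2
  have h2 : (Real.sqrt (1-p) - Real.sqrt (1-p'))^2 ≤ (p - p')^2 := by
    have h := my_amgm_step _ _ _ _ hcq heq hc2 he2
    have hsq : ((1-p) - (1-p'))^2 = (p - p')^2 := by ring
    exact le_of_le_of_eq h hsq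
  have hkey : 1 - r ≤ (p - p')^2 := by
    rw [hrab]
    exact my_key_step _ _ _ _ _ _ ha2 hb2 hc2 he2 h1 h2
  have hr0 : 0 ≤ r := by rw [hr]; positivity
  -- ε bounds
  have hε2 : ε^2 ≤ 1/(1024*((i:ℝ)+1)) := my_eps_step i ε hε0 hε
  have hpp2' : (p - p')^2 ≤ 16*ε^2 := my_sq_upper _ _ hpp2
  have hpp1' : 4*ε^2 ≤ (p-p')^2 := my_sq_lower _ _ hε0.le hpp1
  have hr1 : 1 - r ≤ 1/(64*((i:ℝ)+1)) :=
    my_hr1 r (p-p') ε ((i:ℝ)+1) (by positivity) hkey hpp2' hε2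
  have hρlb : (63:ℝ)/64 ≤ r^i := my_bern_step i r hr0 hr1
  -- min mass bound
  set m : (Fin i → Bool) → ℝ := fun X => min (w X) (w' X) with hm
  have hm0 : ∀ X, 0 ≤ m X := fun X => le_min (hw0 X) (hw0' X)
  have hsm0 : 0 ≤ ∑ X : Fin i → Bool, m X := Finset.sum_nonneg (fun X _ => hm0 X)
  have hCS : (∑ X : Fin i → Bool, Real.sqrt (w X * w' X))^2
      ≤ (∑ X : Fin i → Bool, m X) * (∑ X : Fin i → Bool, max (w X) (w' X)) := by
    have hterm : ∀ X : Fin i → Bool, Real.sqrt (w X * w' X)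
        = Real.sqrt (m X) * Real.sqrt (max (w X) (w' X)) := by
      intro X
      rw [← Real.sqrt_mul (hm0 X), min_mul_max]
    simp_rw [hterm]
    have hcs := Finset.sum_mul_sq_le_sq_mul_sq Finset.univ
      (fun X : Fin i → Bool => Real.sqrt (m X))
      (fun X : Fin i → Bool => Real.sqrt (max (w X) (w' X)))
    have hsq : ∀ X : Fin i → Bool, Real.sqrt (m X)^2 = m X :=
      fun X => Real.sq_sqrt (hm0 X)
    have hsq' : ∀ X : Fin i → Bool, Real.sqrt (max (w X) (w' X))^2 = max (w X) (w' X) :=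
      fun X => Real.sq_sqrt (le_max_iff.2 (Or.inl (hw0 X)))
    simpa [hsq, hsq'] using hcs
  have hmaxsum : (∑ X : Fin i → Bool, max (w X) (w' X)) = 2 - ∑ X : Fin i → Bool, m X := by
    have hptw : ∀ X : Fin i → Bool, max (w X) (w' X) = w X + w' X - m X :=
      fun X => eq_sub_of_add_eq' (min_add_max (w X) (w' X))
    rw [Finset.sum_congr rfl (fun X _ => hptw X), Finset.sum_sub_distrib,
      Finset.sum_add_distrib, hsumw, hsumw']
    ring
  have hmass : (1:ℝ)/8 ≤ ∑ X : Fin i → Bool, m X := by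
    rw [hρ, hmaxsum] at hCS
    exact my_mass_step _ _ hsm0 hρlb hCS
  -- pointwise bound
  set C : ℝ := 2*(d:ℝ)*ξ^2*ε^2 with hC
  have hnormconst : ‖ξ • constVec d p - ξ • constVec d p'‖^2 = (d:ℝ)*ξ^2*(p-p')^2 := by
    rw [EuclideanSpace.norm_eq, Real.sq_sqrt (Finset.sum_nonneg (fun j _ => by positivity))]
    have hco : ∀ j : Fin d, ‖(ξ • constVec d p - ξ • constVec d p') j‖^2 = ξ^2*(p-p')^2 := by
      intro j
      have hcv : (ξ • constVec d p - ξ • constVec d p') j = ξ*(p - p') := by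
        simp [constVec, PiLp.sub_apply, PiLp.smul_apply, smul_eq_mul, mul_sub]
      rw [hcv, Real.norm_eq_abs, sq_abs]; ring
    rw [Finset.sum_congr rfl (fun j _ => hco j), Finset.sum_const, Finset.card_fin,
      nsmul_eq_mul]
    ring
  have hpt : ∀ X : Fin i → Bool,
      C ≤ ‖A X - ξ • constVec d p‖^2 + ‖A X - ξ • constVec d p'‖^2 := by
    intro X
    have htri : ‖ξ • constVec d p - ξ • constVec d p'‖
        ≤ ‖A X - ξ • constVec d p‖ + ‖A X - ξ • constVec d p'‖ := by
      have h := norm_sub_le_norm_sub_add_norm_sub (ξ • constVec d p) (A X) (ξ • constVec d p')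
      rwa [norm_sub_rev (ξ • constVec d p) (A X)] at h
    have hD : 2*C ≤ ‖ξ • constVec d p - ξ • constVec d p'‖^2 := by
      rw [hnormconst, hC]
      exact my_hD (d:ℝ) ξ ε (p-p') (by positivity) hpp1'
    exact my_par_step _ _ _ _ (norm_nonneg _) (norm_nonneg _) (norm_nonneg _) htri hD
  -- assemble
  have hf0 : ∀ X : Fin i → Bool, (0:ℝ) ≤ ‖A X - ξ • constVec d p‖^2 := fun X => by positivity
  have hg0 : ∀ X : Fin i → Bool, (0:ℝ) ≤ ‖A X - ξ • constVec d p'‖^2 := fun X => by positivity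
  have step1 : ∑ X : Fin i → Bool,
        m X * (‖A X - ξ • constVec d p‖^2 + ‖A X - ξ • constVec d p'‖^2)
      ≤ bernExp i p (fun X => ‖A X - ξ • constVec d p‖ ^ 2)
        + bernExp i p' (fun X => ‖A X - ξ • constVec d p'‖ ^ 2) := by
    rw [bernExp, bernExp, ← Finset.sum_add_distrib]
    apply Finset.sum_le_sum
    intro X _
    have e1 : m X * ‖A X - ξ • constVec d p‖^2 ≤ w X * ‖A X - ξ • constVec d p‖^2 :=
      mul_le_mul_of_nonneg_right (min_le_left _ _) (hf0 X)
    have e2 : m X * ‖A X - ξ • constVec d p'‖^2 ≤ w' X * ‖A X - ξ • constVec d p'‖^2 :=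
      mul_le_mul_of_nonneg_right (min_le_right _ _) (hg0 X)
    have hdist : m X * (‖A X - ξ • constVec d p‖^2 + ‖A X - ξ • constVec d p'‖^2)
        = m X * ‖A X - ξ • constVec d p‖^2 + m X * ‖A X - ξ • constVec d p'‖^2 := by ring
    rw [hdist]
    exact add_le_add e1 e2
  have step2 : (∑ X : Fin i → Bool, m X) * C
      ≤ ∑ X : Fin i → Bool,
          m X * (‖A X - ξ • constVec d p‖^2 + ‖A X - ξ • constVec d p'‖^2) := by
    rw [Finset.sum_mul]
    exact Finset.sum_le_sum (fun X _ => mul_le_mul_of_nonneg_left (hpt X) (hm0 X))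
  have hC0 : 0 ≤ C := by rw [hC]; positivity
  have step3 : (1/8 : ℝ) * C ≤ (∑ X : Fin i → Bool, m X) * C :=
    mul_le_mul_of_nonneg_right hmass hC0
  have hfinal : (d : ℝ) * (ξ * ε) ^ 2 / 4 = (1/8:ℝ) * C := by rw [hC]; ring
  calc (d : ℝ) * (ξ * ε) ^ 2 / 4 = (1/8:ℝ) * C := hfinal
  _ ≤ (∑ X : Fin i → Bool, m X) * C := step3
  _ ≤ ∑ X : Fin i → Bool,
        m X * (‖A X - ξ • constVec d p‖^2 + ‖A X - ξ • constVec d p'‖^2) := step2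
  _ ≤ _ := step1
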